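/- Rearrangement (sorted beats crossed) inequality for indirect monitoring: if 0 ≤ w_b ≤ w_a ≤ w_j ≤ w_i < 1, then F_I(w_i, w_a) + F_I(w_j, w_b) ≥ F_I(w_i, w_b) + F_I(w_j, w_a), where F_I(a,b) = 12 a² b⁴/((1+3a²b²)(1−a²b²)). -/

import Mathlib

/-!
With `x = a²` and `y = b²`, partial fractions give
`F_I a b = 3 * (y / (1 - x y) - y / (1 + 3 x y))`. For a term `k x y = y / (1 + c x y)` the
rearrangement gap `k u p + k v q - k u q - k v p` equals `c (v - u) (m p - m q)` with
`m y = y² / ((1 + c u y) (1 + c v y))`, and `m` is increasing because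
`p (1 + c u q) - q (1 + c u p) = p - q`. So the gap has the sign of `-c` when `v ≤ u` and `q ≤ p`:
the term with `c = -1` is supermodular and the one with `c = 3` is submodular, hence their
difference is supermodular.
-/

noncomputable def F_I (a b : ℝ) : ℝ := 12 * a^2 * b^4 / ((1 + 3 * a^2 * b^2) * (1 - a^2 * b^2))

noncomputable def partialFraction (c x y : ℝ) : ℝ := y / (1 + c * x * y)

theorem F_I_eq_partialFraction (a b : ℝ) (hab : a ^ 2 * b ^ 2 ≠ 1) :
    F_I a b = 3 * (partialFraction (-1) (a ^ 2) (b ^ 2) - partialFraction 3 (a ^ 2) (b ^ 2)) := by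
  have h₁ : 1 + -1 * a ^ 2 * b ^ 2 ≠ 0 := fun h => hab (by linarith)
  have h₁' : 1 - a ^ 2 * b ^ 2 ≠ 0 := fun h => hab (by linarith)
  have h₃ : 1 + 3 * a ^ 2 * b ^ 2 ≠ 0 := by positivity
  unfold F_I partialFraction
  rw [div_sub_div _ _ h₁ h₃, ← mul_div_assoc,
    div_eq_div_iff (mul_ne_zero h₃ h₁') (mul_ne_zero h₁ h₃)]
  ring

section Rearrangement

variable {c u v p q : ℝ}

theorem partialFraction_sub_partialFraction {y : ℝ} (huy : 1 + c * u * y ≠ 0)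
    (hvy : 1 + c * v * y ≠ 0) :
    partialFraction c u y - partialFraction c v y =
      c * (v - u) * (y ^ 2 / ((1 + c * u * y) * (1 + c * v * y))) := by
  unfold partialFraction
  rw [div_sub_div _ _ huy hvy, ← mul_div_assoc,
    div_eq_div_iff (mul_ne_zero huy hvy) (mul_ne_zero huy hvy)]
  ring

theorem sq_div_mul_le_sq_div_mul (hq : 0 ≤ q) (hqp : q ≤ p) (hup : 0 < 1 + c * u * p)
    (huq : 0 < 1 + c * u * q) (hvp : 0 < 1 + c * v * p) (hvq : 0 < 1 + c * v * q) :
    q ^ 2 / ((1 + c * u * q) * (1 + c * v * q)) ≤ p ^ 2 / ((1 + c * u * p) * (1 + c * v * p)) := by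
  have hu : q * (1 + c * u * p) ≤ p * (1 + c * u * q) := by linear_combination hqp
  have hv : q * (1 + c * v * p) ≤ p * (1 + c * v * q) := by linear_combination hqp
  rw [div_le_div_iff₀ (by positivity) (by positivity)]
  calc q ^ 2 * ((1 + c * u * p) * (1 + c * v * p))
      = (q * (1 + c * u * p)) * (q * (1 + c * v * p)) := by ring
    _ ≤ (p * (1 + c * u * q)) * (p * (1 + c * v * q)) :=
        mul_le_mul hu hv (by positivity) (mul_nonneg (hq.trans hqp) huq.le)
    _ = p ^ 2 * ((1 + c * u * q) * (1 + c * v * q)) := by ring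

theorem mul_partialFraction_sorted_le_crossed (hvu : v ≤ u) (hq : 0 ≤ q) (hqp : q ≤ p)
    (hup : 0 < 1 + c * u * p) (huq : 0 < 1 + c * u * q) (hvp : 0 < 1 + c * v * p)
    (hvq : 0 < 1 + c * v * q) :
    c * (partialFraction c u p + partialFraction c v q) ≤
      c * (partialFraction c u q + partialFraction c v p) := by
  have hm := sq_div_mul_le_sq_div_mul hq hqp hup huq hvp hvq
  rw [← sub_nonpos]
  calc c * (partialFraction c u p + partialFraction c v q) -
        c * (partialFraction c u q + partialFraction c v p)
      = c * ((partialFraction c u p - partialFraction c v p) -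
          (partialFraction c u q - partialFraction c v q)) := by ring
    _ = -(c ^ 2 * (u - v) * (p ^ 2 / ((1 + c * u * p) * (1 + c * v * p)) -
          q ^ 2 / ((1 + c * u * q) * (1 + c * v * q)))) := by
        rw [partialFraction_sub_partialFraction hup.ne' hvp.ne',
          partialFraction_sub_partialFraction huq.ne' hvq.ne']
        ring
    _ ≤ 0 := neg_nonpos.2 <|
        mul_nonneg (mul_nonneg (sq_nonneg c) (sub_nonneg.2 hvu)) (sub_nonneg.2 hm)

end Rearrangement

theorem sq_mul_sq_lt_one {x y : ℝ} (hx0 : 0 ≤ x) (hx1 : x < 1) (hy0 : 0 ≤ y) (hy1 : y < 1) :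
    x ^ 2 * y ^ 2 < 1 := by
  rw [← mul_pow]
  exact pow_lt_one₀ (mul_nonneg hx0 hy0) (mul_lt_one_of_nonneg_of_lt_one_left hx0 hx1 hy1.le)
    two_ne_zero

theorem sorted_beats_crossed (wi wj wa wb : ℝ) (hb0 : 0 ≤ wb) (hba : wb ≤ wa)
    (haj : wa ≤ wj) (hji : wj ≤ wi) (hi1 : wi < 1) :
    F_I wi wa + F_I wj wb ≥ F_I wi wb + F_I wj wa := by
  have ha0 : 0 ≤ wa := hb0.trans hba
  have hj0 : 0 ≤ wj := ha0.trans haj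
  have hj1 : wj < 1 := hji.trans_lt hi1
  have ha1 : wa < 1 := haj.trans_lt hj1
  have hb1 : wb < 1 := hba.trans_lt ha1
  have hia := sq_mul_sq_lt_one (hj0.trans hji) hi1 ha0 ha1
  have hib := sq_mul_sq_lt_one (hj0.trans hji) hi1 hb0 hb1
  have hja := sq_mul_sq_lt_one hj0 hj1 ha0 ha1
  have hjb := sq_mul_sq_lt_one hj0 hj1 hb0 hb1
  have hvu : wj ^ 2 ≤ wi ^ 2 := pow_le_pow_left₀ hj0 hji 2
  have hqp : wb ^ 2 ≤ wa ^ 2 := pow_le_pow_left₀ hb0 hba 2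
  have hsuper := mul_partialFraction_sorted_le_crossed (c := -1) hvu (sq_nonneg wb) hqp
    (by linarith) (by linarith) (by linarith) (by linarith)
  have hsub := mul_partialFraction_sorted_le_crossed (c := 3) hvu (sq_nonneg wb) hqp
    (by positivity) (by positivity) (by positivity) (by positivity)
  rw [F_I_eq_partialFraction _ _ hia.ne, F_I_eq_partialFraction _ _ hib.ne,
    F_I_eq_partialFraction _ _ hja.ne, F_I_eq_partialFraction _ _ hjb.ne]
  linarith
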